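/- For a Hermitian matrix P with P² = I and θ ∈ ℝ, the identity e^{iθP} = (cos θ − sin θ)·I + (√2 sin θ)·e^{i(π/4)P} holds. -/

import Mathlib

open Complex Matrix

/-!
If `P * P = 1`, then `(a, b) ↦ ((a + b) / 2) • 1 + ((a - b) / 2) • P` is a continuous algebra
homomorphism from `ℂ × ℂ` to any normed `ℂ`-algebra containing `P`, so it commutes with `exp`.
Evaluating at `(z, -z)` gives `exp (z • P) = cosh z • 1 + sinh z • P`, hence
`exp ((θ * I) • P) = cos θ • 1 + (sin θ * I) • P`. Both sides of the decomposition are then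
combinations of `1` and `P`, and the coefficients agree because `cos (π / 4) = sin (π / 4) = √2 / 2`.
-/

theorem smul_one_add_smul_mul_smul_one_add_smul {K A : Type*} [CommSemiring K] [Semiring A]
    [Algebra K A] {x : A} (hx : x * x = 1) (a b c d : K) :
    (a • 1 + b • x) * (c • 1 + d • x) = (a * c + b * d) • (1 : A) + (a * d + b * c) • x := by
  simp only [add_mul, mul_add, smul_mul_smul, one_mul, mul_one, hx]
  match_scalars <;> ring

/-- The idempotents `(1, 0)` and `(0, 1)` go to the projections `(1 ± x) / 2` onto the
`±1`-eigenspaces of `x`. -/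
def algHomOfMulSelfEqOne {K A : Type*} [Field K] [CharZero K] [Ring A] [Algebra K A]
    (x : A) (hx : x * x = 1) : K × K →ₐ[K] A where
  toFun p := ((p.1 + p.2) / 2) • 1 + ((p.1 - p.2) / 2) • x
  map_one' := by simp
  map_mul' p q := by
    rw [smul_one_add_smul_mul_smul_one_add_smul hx]
    simp only [Prod.fst_mul, Prod.snd_mul]
    congr 2 <;> ring
  map_zero' := by simp
  map_add' p q := by
    simp only [Prod.fst_add, Prod.snd_add]
    match_scalars <;> ring
  commutes' r := by
    simp [Algebra.algebraMap_eq_smul_one]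

section Exp

variable {A : Type*} [NormedRing A] [NormedAlgebra ℂ A] {x : A}

theorem exp_smul_of_mul_self_eq_one (hx : x * x = 1) (z : ℂ) :
    NormedSpace.exp (z • x) = cosh z • (1 : A) + sinh z • x := by
  have hcont : Continuous (algHomOfMulSelfEqOne (K := ℂ) x hx) := by
    change Continuous fun p : ℂ × ℂ => ((p.1 + p.2) / 2) • (1 : A) + ((p.1 - p.2) / 2) • x
    fun_prop
  have hz : algHomOfMulSelfEqOne x hx (z, -z) = z • x := by
    change ((z + -z) / 2) • (1 : A) + ((z - -z) / 2) • x = z • x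
    simp
  have hexp : NormedSpace.exp (z, -z) = (exp z, exp (-z)) := by
    ext <;> simp [Complex.exp_eq_exp_ℂ]
  rw [← hz, ← NormedSpace.map_exp_of_mem_ball (𝕂 := ℂ) _ hcont _
    (by simp [NormedSpace.expSeries_radius_eq_top]), hexp, cosh, sinh]
  rfl

theorem exp_mul_I_smul_of_mul_self_eq_one (hx : x * x = 1) (z : ℂ) :
    NormedSpace.exp ((z * I) • x) = cos z • (1 : A) + (sin z * I) • x := by
  rw [exp_smul_of_mul_self_eq_one hx, cosh_mul_I, sinh_mul_I]

end Exp

theorem exp_theta_pauli_clifford_decomposition_general {n : ℕ} (P : Matrix (Fin n) (Fin n) ℂ)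
    (hP2 : P * P = 1) (θ : ℝ) :
    NormedSpace.exp (((θ : ℂ) * Complex.I) • P) =
      ((Real.cos θ - Real.sin θ : ℝ) : ℂ) • (1 : Matrix (Fin n) (Fin n) ℂ) +
        ((Real.sqrt 2 * Real.sin θ : ℝ) : ℂ) •
          NormedSpace.exp ((((Real.pi / 4 : ℝ) : ℂ) * Complex.I) • P) := by
  -- `NormedSpace.exp` only depends on the topology, so any compatible matrix norm will do.
  have hexp (z : ℂ) : NormedSpace.exp ((z * I) • P) = cos z • 1 + (sin z * I) • P :=
    @exp_mul_I_smul_of_mul_self_eq_one _ Matrix.linftyOpNormedRing Matrix.linftyOpNormedAlgebra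
      _ hP2 z
  rw [hexp, hexp, ← ofReal_cos, ← ofReal_sin, ← ofReal_cos, ← ofReal_sin, Real.cos_pi_div_four,
    Real.sin_pi_div_four]
  have hsqrt : ((√2 : ℝ) : ℂ) * ((√2 : ℝ) : ℂ) = 2 := by
    exact_mod_cast Real.mul_self_sqrt zero_le_two
  match_scalars
  · linear_combination -(sin (θ : ℂ)) / 2 * hsqrt
  · linear_combination -(sin (θ : ℂ)) * I / 2 * hsqrt

/-- The optimal Clifford decomposition of a Pauli rotation:
`e^{iθP} = (cos θ − sin θ)·I + (√2 sin θ)·e^{i(π/4)P}`. -/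
theorem exp_theta_pauli_clifford_decomposition {n : ℕ} (P : Matrix (Fin n) (Fin n) ℂ)
    (hP : P.IsHermitian) (hP2 : P * P = 1) (θ : ℝ) :
    NormedSpace.exp (((θ : ℂ) * Complex.I) • P) =
      ((Real.cos θ - Real.sin θ : ℝ) : ℂ) • (1 : Matrix (Fin n) (Fin n) ℂ) +
        ((Real.sqrt 2 * Real.sin θ : ℝ) : ℂ) •
          NormedSpace.exp ((((Real.pi / 4 : ℝ) : ℂ) * Complex.I) • P) :=
  exp_theta_pauli_clifford_decomposition_general P hP2 θ
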